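/- arXiv:1405.2940 — 11 statements merged into one kernel-verified Lean document; each statement's English description precedes it below -/
import Mathlib

section
/- Let X and Y be abelian Polish groups. If A ⊆ X is Haar meager in X and B ⊆ Y is contained in some Borel subset B₀ of Y, then the product set A × B is Haar meager in the product group X × Y. -/
open MeasureTheory Set

/-- A set in a topological abelian group is *Haar meager* if there is a Borel set `B ⊇ A`,
a nonempty compact metric space `K` and a continuous `f : K → G` such that `f ⁻¹' (B + x)`
is meager in `K` for every `x ∈ G`. -/
def IsHaarMeager {G : Type*} [TopologicalSpace G] [AddCommGroup G] (A : Set G) : Prop :=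
  ∃ B : Set G, A ⊆ B ∧ MeasurableSet[borel G] B ∧
    ∃ (K : Type) (_ : MetricSpace K) (_ : CompactSpace K) (_ : Nonempty K) (f : K → G),
      Continuous f ∧ ∀ x : G, IsMeagre (f ⁻¹' ((fun b => b + x) '' B))

/-- A set in a topological abelian group is *Haar null* if there is a Borel probability
measure `μ` and a Borel set `B ⊇ A` with `μ (x + B) = 0` for every `x ∈ G`. -/
def IsHaarNull {G : Type*} [TopologicalSpace G] [AddCommGroup G] (A : Set G) : Prop :=
  ∃ μ : @Measure G (borel G), @IsProbabilityMeasure G (borel G) μ ∧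
    ∃ B : Set G, A ⊆ B ∧ MeasurableSet[borel G] B ∧
      ∀ x : G, μ ((fun b => x + b) '' B) = 0

/-!
Push the compact witness `f : K → X` for `A` into `X × Y` along the horizontal axis,
`k ↦ (f k, 0)`. A point of `K` that lands in a translate of the Borel rectangle `B_A ×ˢ B₀`
already lands, in the first coordinate, in the corresponding translate of `B_A`, so every such
preimage is contained in a meager set of `K`. The rectangle is Borel without any countability
assumption, because the product of the Borel σ-algebras is always coarser than the Borel
σ-algebra of the product topology.
-/

theorem measurableSet_borel_prod {X Y : Type*} [TopologicalSpace X] [TopologicalSpace Y]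
    {s : Set X} {t : Set Y} (hs : MeasurableSet[borel X] s) (ht : MeasurableSet[borel Y] t) :
    MeasurableSet[borel (X × Y)] (s ×ˢ t) := by
  borelize X Y
  exact prod_le_borel_prod _ (hs.prod ht)

theorem preimage_prodMk_image_add_prod_subset {K X Y : Type*} [Add X] [Add Y]
    (f : K → X) (g : K → Y) (s : Set X) (t : Set Y) (z : X × Y) :
    (fun k => (f k, g k)) ⁻¹' ((· + z) '' (s ×ˢ t)) ⊆ f ⁻¹' ((· + z.1) '' s) := by
  rintro k ⟨⟨a, _⟩, ⟨ha, -⟩, h⟩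
  exact ⟨a, ha, congrArg Prod.fst h⟩

theorem haarMeager_prod_general {X Y : Type*}
    [TopologicalSpace X] [AddCommGroup X]
    [TopologicalSpace Y] [AddCommGroup Y]
    (A : Set X) (B B₀ : Set Y) (hA : IsHaarMeager A) (hBB₀ : B ⊆ B₀)
    (hB₀ : MeasurableSet[borel Y] B₀) :
    IsHaarMeager (A ×ˢ B) := by
  obtain ⟨BA, hABA, hBA, K, _, _, _, f, hf, hmeager⟩ := hA
  refine ⟨BA ×ˢ B₀, prod_mono hABA hBB₀, measurableSet_borel_prod hBA hB₀, K, ‹_›, ‹_›, ‹_›,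
    fun k => (f k, 0), hf.prodMk continuous_const, fun z => ?_⟩
  exact (hmeager z.1).mono (preimage_prodMk_image_add_prod_subset f 0 BA B₀ z)

/-- If `A ⊆ X` is Haar meager and `B ⊆ Y` is contained in a Borel set `B₀`, then
`A × B` is Haar meager in `X × Y`. -/
theorem haarMeager_prod {X Y : Type*}
    [TopologicalSpace X] [AddCommGroup X] [IsTopologicalAddGroup X] [PolishSpace X]
    [TopologicalSpace Y] [AddCommGroup Y] [IsTopologicalAddGroup Y] [PolishSpace Y]
    (A : Set X) (B B₀ : Set Y) (hA : IsHaarMeager A) (hBB₀ : B ⊆ B₀)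
    (hB₀ : MeasurableSet[borel Y] B₀) :
    IsHaarMeager (A ×ˢ B) :=
  haarMeager_prod_general A B B₀ hA hBB₀ hB₀
end

section
/- Let X and Y be abelian Polish groups. If A ⊆ X is a Borel set belonging to F(X) (i.e., for every compact set K ⊆ X there exists x ∈ X with K + x ⊆ A) and B ⊆ Y is a Borel set which is not Haar meager in Y, then the product set A × B is not Haar meager in the product group X × Y. -/
open MeasureTheory Set

theorem preimage_snd_translate_subset_preimage_translate {K X Y : Type*}
    [AddCommGroup X] [AddCommGroup Y] {A : Set X} {B : Set Y} {D : Set (X × Y)}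
    (hD : A ×ˢ B ⊆ D) {f : K → X × Y} {x₀ : X} (hx₀ : ∀ k, (f k).1 + x₀ ∈ A) (y : Y) :
    (Prod.snd ∘ f) ⁻¹' ((fun b => b + y) '' B) ⊆ f ⁻¹' ((fun d => d + (-x₀, y)) '' D) := by
  rintro k ⟨b, hb, hby⟩
  refine ⟨((f k).1 + x₀, b), hD ⟨hx₀ k, hb⟩, ?_⟩
  ext
  · simp
  · simpa using hby

theorem not_haarMeager_prod_general {X Y : Type*}
    [TopologicalSpace X] [AddCommGroup X]
    [TopologicalSpace Y] [AddCommGroup Y]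
    (A : Set X) (B : Set Y)
    (hAF : ∀ K : Set X, IsCompact K → ∃ x : X, (fun k => k + x) '' K ⊆ A)
    (hB : MeasurableSet[borel Y] B) (hBm : ¬ IsHaarMeager B) :
    ¬ IsHaarMeager (A ×ˢ B) := by
  rintro ⟨D, hD, -, K, _, _, _, f, hf, hmeagre⟩
  obtain ⟨x₀, hx₀⟩ := hAF (range (Prod.fst ∘ f)) (isCompact_range (continuous_fst.comp hf))
  refine hBm ⟨B, subset_rfl, hB, K, ‹_›, ‹_›, ‹_›, Prod.snd ∘ f, continuous_snd.comp hf,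
    fun y => (hmeagre (-x₀, y)).mono ?_⟩
  exact preimage_snd_translate_subset_preimage_translate hD
    (fun k => hx₀ ⟨(f k).1, mem_range_self k, rfl⟩) y

/-- If `A ⊆ X` is a Borel set such that every compact set admits a translate inside `A`,
and `B ⊆ Y` is a Borel set which is not Haar meager, then `A × B` is not Haar meager
in `X × Y`. -/
theorem not_haarMeager_prod {X Y : Type*}
    [TopologicalSpace X] [AddCommGroup X] [IsTopologicalAddGroup X] [PolishSpace X]
    [TopologicalSpace Y] [AddCommGroup Y] [IsTopologicalAddGroup Y] [PolishSpace Y]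
    (A : Set X) (B : Set Y)
    (hA : MeasurableSet[borel X] A)
    (hAF : ∀ K : Set X, IsCompact K → ∃ x : X, (fun k => k + x) '' K ⊆ A)
    (hB : MeasurableSet[borel Y] B) (hBm : ¬ IsHaarMeager B) :
    ¬ IsHaarMeager (A ×ˢ B) :=
  not_haarMeager_prod_general A B hAF hB hBm
end

section
/- Let X be an abelian Polish group. Every Borel set A ⊆ X belonging to F(X) (i.e., such that for every compact set K ⊆ X there exists x ∈ X with K + x ⊆ A) is not Haar null in X. -/
open MeasureTheory Set

theorem exists_measure_image_add_ne_zero_of_forall_isCompact {G : Type*} [TopologicalSpace G]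
    [AddCommGroup G] [MeasurableSpace G] (μ : Measure G) [μ.InnerRegular] (hμ : μ ≠ 0)
    {A : Set G} (hA : ∀ K : Set G, IsCompact K → ∃ x : G, (fun k => k + x) '' K ⊆ A) :
    ∃ x : G, μ ((fun a => x + a) '' A) ≠ 0 := by
  obtain ⟨K, hK, hμK⟩ := Measure.InnerRegular.exists_isCompact_not_null.2 hμ
  obtain ⟨x, hx⟩ := hA K hK
  have hK_sub : K ⊆ (fun a => -x + a) '' A := fun k hk =>
    ⟨k + x, hx ⟨k, hk, rfl⟩, neg_add_cancel_comm_assoc x k⟩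
  exact ⟨-x, fun h => hμK (measure_mono_null hK_sub h)⟩

theorem not_haarNull_of_mem_F_general {X : Type*}
    [TopologicalSpace X] [AddCommGroup X] [PolishSpace X]
    (A : Set X)
    (hAF : ∀ K : Set X, IsCompact K → ∃ x : X, (fun k => k + x) '' K ⊆ A) :
    ¬ IsHaarNull A := by
  rintro ⟨μ, hμ, B, hAB, -, hB_null⟩
  let : MeasurableSpace X := borel X
  have : BorelSpace X := ⟨rfl⟩
  -- Ulam: finite Borel measures on Polish spaces are inner regular, found by instance search.
  obtain ⟨x, hx⟩ := exists_measure_image_add_ne_zero_of_forall_isCompact μ hμ.ne_zero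
    fun K hK => (hAF K hK).imp fun _ hx => hx.trans hAB
  exact hx (hB_null x)

/-- In an abelian Polish group, a Borel set `A` such that every compact set admits a
translate inside `A` is not Haar null. -/
theorem not_haarNull_of_mem_F {X : Type*}
    [TopologicalSpace X] [AddCommGroup X] [IsTopologicalAddGroup X] [PolishSpace X]
    (A : Set X) (hA : MeasurableSet[borel X] A)
    (hAF : ∀ K : Set X, IsCompact K → ∃ x : X, (fun k => k + x) '' K ⊆ A) :
    ¬ IsHaarNull A :=
  not_haarNull_of_mem_F_general A hAF
end

section
/- Let X be an abelian Polish group. Every Borel set A ⊆ X belonging to F(X) (i.e., such that for every compact set K ⊆ X there exists x ∈ X with K + x ⊆ A) is not Haar meager in X. -/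
open MeasureTheory Set

/-- Take `C = f(K)` for a witness `f : K → G`: if `C + x ⊆ A ⊆ B`, then `f ⁻¹' (B - x)` is all of
`K`, which is not meager because a compact metric space is a Baire space. -/
theorem IsHaarMeager.exists_isCompact_forall_image_add_not_subset {G : Type*}
    [TopologicalSpace G] [AddCommGroup G] {A : Set G} (hA : IsHaarMeager A) :
    ∃ C : Set G, IsCompact C ∧ ∀ x : G, ¬ (fun c => c + x) '' C ⊆ A := by
  obtain ⟨B, hAB, -, K, _, _, _, f, hf, hmeager⟩ := hA
  refine ⟨range f, isCompact_range hf, fun x hx => ?_⟩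
  have hpreimage : f ⁻¹' ((fun b => b + -x) '' B) = univ := by
    rw [image_add_right, neg_neg, eq_univ_iff_forall]
    exact fun k => hAB (hx ⟨f k, mem_range_self k, rfl⟩)
  exact not_isMeagre_of_isOpen isOpen_univ univ_nonempty (hpreimage ▸ hmeager (-x))

theorem not_haarMeager_of_mem_F_general {X : Type*}
    [TopologicalSpace X] [AddCommGroup X]
    (A : Set X)
    (hAF : ∀ K : Set X, IsCompact K → ∃ x : X, (fun k => k + x) '' K ⊆ A) :
    ¬ IsHaarMeager A := by
  intro hA
  obtain ⟨C, hC, hnot⟩ := hA.exists_isCompact_forall_image_add_not_subset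
  obtain ⟨x, hx⟩ := hAF C hC
  exact hnot x hx

/-- In an abelian Polish group, a Borel set `A` such that every compact set admits a
translate inside `A` is not Haar meager. -/
theorem not_haarMeager_of_mem_F {X : Type*}
    [TopologicalSpace X] [AddCommGroup X] [IsTopologicalAddGroup X] [PolishSpace X]
    (A : Set X) (hA : MeasurableSet[borel X] A)
    (hAF : ∀ K : Set X, IsCompact K → ∃ x : X, (fun k => k + x) '' K ⊆ A) :
    ¬ IsHaarMeager A :=
  not_haarMeager_of_mem_F_general A hAF
end

section
/- Let X be an abelian Polish group, let A ⊆ X be a Borel set that is not Haar null in X, and let B ⊆ ℝ be a Borel set of positive Lebesgue measure. Then the set B × A is not Haar null in the abelian Polish group ℝ × X. -/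
open MeasureTheory Set

/-!
Suppose `C ⊇ B × A` is Borel and `μ` witnesses that `C` is Haar null in `ℝ × X`. The set
`A' = nonnullSections volume C` of points `y` whose section `{s | (s, y) ∈ C}` has positive
Lebesgue measure is Borel and contains `A`. Applying Fubini to `{(t, q) | q - (t, x) ∈ C}`,
whose `t`-sections are the `μ`-null translates `(t, x) + C`, shows that for `μ`-a.e. `q` the
section of `C` over `q.2 - x` is Lebesgue null; hence the projection of `μ` to `X` kills every
translate `x + A'`, so `A` is Haar null.
-/

section Sections

variable {G H : Type*} [MeasurableSpace G]

def nonnullSections (ν : Measure G) (C : Set (G × H)) : Set H :=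
  {y | ν ((·, y) ⁻¹' C) ≠ 0}

theorem subset_nonnullSections {ν : Measure G} {A : Set H} {B : Set G} {C : Set (G × H)}
    (hC : B ×ˢ A ⊆ C) (hB : ν B ≠ 0) : A ⊆ nonnullSections ν C :=
  fun _ hy => ne_bot_of_le_ne_bot hB (measure_mono fun _ hs => hC ⟨hs, hy⟩)

variable [MeasurableSpace H]

theorem measurableSet_nonnullSections (ν : Measure G) [SFinite ν] {C : Set (G × H)}
    (hC : MeasurableSet C) : MeasurableSet (nonnullSections ν C) :=
  (measurable_measure_prodMk_right hC) (measurableSet_singleton 0).compl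

variable [AddCommGroup G] [AddCommGroup H] [MeasurableSub₂ H]

theorem ae_measure_sub_mem_eq_zero [MeasurableSub₂ G] (ν : Measure G) [SFinite ν] (μ : Measure (G × H))
    [SFinite μ] {C : Set (G × H)} (hC : MeasurableSet C)
    (hnull : ∀ z, μ ((z + ·) '' C) = 0) (x : H) :
    ∀ᵐ q ∂μ, ν {t | q - (t, x) ∈ C} = 0 := by
  set E : Set (G × (G × H)) := {p | p.2 - (p.1, x) ∈ C}
  have hE : MeasurableSet E := by
    have hsub : Measurable fun p : G × (G × H) => p.2 - (p.1, x) :=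
      (measurable_snd.fst.sub measurable_fst).prodMk (measurable_snd.snd.sub_const x)
    exact hsub hC
  have hsection : ∀ t, Prod.mk t ⁻¹' E = ((t, x) + ·) '' C := by
    intro t
    ext q
    simp only [E, mem_preimage, mem_ofPred_eq, image_add_left, neg_add_eq_sub]
  have hprod : ν.prod μ E = 0 := by
    simp only [Measure.prod_apply hE, hsection, hnull, lintegral_zero]
  rw [Measure.prod_apply_symm hE, lintegral_eq_zero_iff
    (measurable_measure_prodMk_right hE)] at hprod
  exact hprod

theorem measure_map_snd_add_image_nonnullSections [MeasurableAdd₂ G] [MeasurableNeg G]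
    (ν : Measure G) [SFinite ν] [ν.IsAddLeftInvariant] [ν.IsNegInvariant] (μ : Measure (G × H)) [SFinite μ]
    {C : Set (G × H)} (hC : MeasurableSet C) (hnull : ∀ z, μ ((z + ·) '' C) = 0) (x : H) :
    μ.map Prod.snd ((x + ·) '' nonnullSections ν C) = 0 := by
  have himage : (x + ·) '' nonnullSections ν C = (· - x) ⁻¹' nonnullSections ν C := by
    simp only [image_add_left, neg_add_eq_sub]
  rw [himage, Measure.map_apply measurable_snd
    ((measurableSet_nonnullSections ν hC).preimage (measurable_sub_const x)),
    measure_eq_zero_iff_ae_notMem]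
  filter_upwards [ae_measure_sub_mem_eq_zero ν μ hC hnull x] with q hq
  have hsection : {t | q - (t, x) ∈ C} = (q.1 - ·) ⁻¹' ((·, q.2 - x) ⁻¹' C) := rfl
  rw [hsection, (Measure.measurePreserving_sub_left ν q.1).measure_preimage
    (measurable_prodMk_right hC).nullMeasurableSet] at hq
  simpa [nonnullSections] using hq

end Sections

theorem not_haarNull_prod_general {X : Type*}
    [TopologicalSpace X] [AddCommGroup X] [IsTopologicalAddGroup X] [PolishSpace X]
    (A : Set X) (hAn : ¬ IsHaarNull A)
    (B : Set ℝ) (hBpos : 0 < volume B) :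
    ¬ IsHaarNull (B ×ˢ A) := by
  let : MeasurableSpace X := borel X
  have : BorelSpace X := ⟨rfl⟩
  intro hBA
  -- `ℝ × X` is second countable, so its Borel σ-algebra is the product σ-algebra.
  rw [IsHaarNull, ← BorelSpace.measurable_eq (α := ℝ × X)] at hBA
  obtain ⟨μ, hμ, C, hBAC, hC, hnull⟩ := hBA
  exact hAn ⟨μ.map Prod.snd, Measure.isProbabilityMeasure_map measurable_snd.aemeasurable,
    nonnullSections volume C, subset_nonnullSections hBAC hBpos.ne',
    measurableSet_nonnullSections volume hC,
    measure_map_snd_add_image_nonnullSections volume μ hC hnull⟩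

/-- If `A ⊆ X` is a Borel set which is not Haar null and `B ⊆ ℝ` is a Borel set of
positive Lebesgue measure, then `B × A` is not Haar null in `ℝ × X`. -/
theorem not_haarNull_prod {X : Type*}
    [TopologicalSpace X] [AddCommGroup X] [IsTopologicalAddGroup X] [PolishSpace X]
    (A : Set X) (hA : MeasurableSet[borel X] A) (hAn : ¬ IsHaarNull A)
    (B : Set ℝ) (hB : MeasurableSet[borel ℝ] B) (hBpos : 0 < volume B) :
    ¬ IsHaarNull (B ×ˢ A) :=
  not_haarNull_prod_general A hAn B hBpos
end

section
/- Let X be an abelian Polish group, let A ⊆ X be a Borel set belonging to F(X) (i.e., for every compact set K ⊆ X there exists x ∈ X with K + x ⊆ A), and let B ⊆ ℝ be a meager Borel set of positive Lebesgue measure. Then the set S := B × A is Haar meager (hence meager) but not Haar null in the abelian Polish group ℝ × X. -/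
open MeasureTheory Set Filter

-- Dense open subsets of `Y` stay dense in a subspace `s ⊆ closure (interior s)`.
theorem IsMeagre.preimage_val_of_subset_closure_interior {Y : Type*} [TopologicalSpace Y]
    {s : Set Y} (hs : s ⊆ closure (interior s)) {t : Set Y} (ht : IsMeagre t) :
    IsMeagre (((↑) : s → Y) ⁻¹' t) := by
  have : Tendsto ((↑) : s → Y) (residual s) (residual Y) := by
    refine le_countableGenerate_iff_of_countableInterFilter.mpr ?_
    rintro u ⟨hu, hud⟩
    refine residual_of_dense_open (hu.preimage continuous_subtype_val) ?_
    rw [Subtype.dense_iff, image_preimage_eq_inter_range, Subtype.range_coe]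
    calc s ⊆ closure (interior s) := hs
      _ ⊆ closure (interior s ∩ u) :=
        closure_minimal (hud.open_subset_closure_inter isOpen_interior) isClosed_closure
      _ ⊆ closure (u ∩ s) := closure_mono fun _ h => ⟨h.2, interior_subset h.1⟩
  exact this ht

theorem isHaarMeager_prod_of_isMeagre {X : Type*} [TopologicalSpace X] [AddCommGroup X]
    {B : Set ℝ} (hB : MeasurableSet[borel ℝ] B) (hBme : IsMeagre B)
    {A : Set X} (hA : MeasurableSet[borel X] A) : IsHaarMeager (B ×ˢ A) := by
  have hIcc : Icc (0 : ℝ) 1 ⊆ closure (interior (Icc 0 1)) := by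
    rw [interior_Icc, closure_Ioo zero_ne_one]
  refine ⟨B ×ˢ A, subset_rfl,
    (continuous_fst.borel_measurable hB).inter (continuous_snd.borel_measurable hA),
    Icc (0 : ℝ) 1, inferInstance, isCompact_iff_compactSpace.mp isCompact_Icc, ⟨⟨0, by simp⟩⟩,
    fun t => ((t : ℝ), 0), continuous_subtype_val.prodMk continuous_const, fun x => ?_⟩
  have hBx : IsMeagre ((· - x.1) ⁻¹' B) :=
    hBme.preimage_of_isOpenMap (continuous_sub_right x.1) (Homeomorph.subRight x.1).isOpenMap
  refine (hBx.preimage_val_of_subset_closure_interior hIcc).mono ?_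
  rintro t ⟨b, hb, hbt⟩
  have hbt₁ : b.1 + x.1 = t := congrArg Prod.fst hbt
  simpa [← hbt₁] using hb.1

section Translates

variable {G : Type*} [MeasurableSpace G] [AddGroup G] [MeasurableAdd₂ G]

theorem lintegral_measure_preimage_add_right (μ ν : Measure G) [SFinite μ] [SFinite ν]
    [μ.IsAddLeftInvariant] {B : Set G} (hB : MeasurableSet B) :
    ∫⁻ t, ν ((· + t) ⁻¹' B) ∂μ = μ B * ν univ := by
  have hE : MeasurableSet {p : G × G | p.2 + p.1 ∈ B} :=
    hB.preimage (measurable_snd.add measurable_fst)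
  calc ∫⁻ t, ν ((· + t) ⁻¹' B) ∂μ = μ.prod ν {p | p.2 + p.1 ∈ B} := (Measure.prod_apply hE).symm
    _ = ∫⁻ y, μ ((y + ·) ⁻¹' B) ∂ν := Measure.prod_apply_symm hE
    _ = μ B * ν univ := by simp [measure_preimage_add]

theorem exists_measure_preimage_add_right_pos (μ ν : Measure G) [SFinite μ] [SFinite ν]
    [μ.IsAddLeftInvariant] {B : Set G} (hB : MeasurableSet B) (hBpos : μ B ≠ 0) (hν : ν ≠ 0) :
    ∃ t, 0 < ν ((· + t) ⁻¹' B) := by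
  by_contra! h
  have := lintegral_measure_preimage_add_right μ ν hB
  simp only [nonpos_iff_eq_zero.mp (h _), lintegral_zero] at this
  exact mul_ne_zero hBpos (Measure.measure_univ_ne_zero.mpr hν) this.symm

theorem exists_measure_preimage_add_prod_pos {X : Type*} [TopologicalSpace X] [PolishSpace X]
    [MeasurableSpace X] [BorelSpace X] [Add X] (η : Measure G) [SFinite η]
    [η.IsAddLeftInvariant] (μ : Measure (G × X)) [IsFiniteMeasure μ] (hμ : μ ≠ 0)
    {B : Set G} (hB : MeasurableSet B) (hBpos : η B ≠ 0)
    {A : Set X} (hAF : ∀ K : Set X, IsCompact K → ∃ x : X, (· + x) '' K ⊆ A) :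
    ∃ z : G × X, 0 < μ ((· + z) ⁻¹' (B ×ˢ A)) := by
  have hμX : 0 < μ.map Prod.snd univ := by
    rw [Measure.map_apply measurable_snd MeasurableSet.univ]
    exact Measure.measure_univ_pos.mpr hμ
  obtain ⟨K, -, hK, hKpos⟩ := MeasurableSet.univ.exists_lt_isCompact hμX
  rw [Measure.map_apply measurable_snd hK.measurableSet] at hKpos
  obtain ⟨x, hx⟩ := hAF K hK
  set ν := (μ.restrict (Prod.snd ⁻¹' K)).map Prod.fst
  have hν : ν ≠ 0 := by
    rw [← Measure.measure_univ_pos, Measure.map_apply measurable_fst MeasurableSet.univ,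
      preimage_univ, Measure.restrict_apply_univ]
    exact hKpos
  obtain ⟨t, ht⟩ := exists_measure_preimage_add_right_pos η ν hB hBpos hν
  refine ⟨(t, x), ht.trans_le ?_⟩
  have hBt : MeasurableSet ((· + t) ⁻¹' B) := hB.preimage (measurable_add_const t)
  rw [Measure.map_apply measurable_fst hBt, Measure.restrict_apply (measurable_fst hBt)]
  exact measure_mono fun p hp => ⟨hp.1, hx ⟨p.2, hp.2, rfl⟩⟩

end Translates

theorem not_isHaarNull_prod {X : Type*} [TopologicalSpace X] [AddCommGroup X] [PolishSpace X]
    {B : Set ℝ} (hB : MeasurableSet B) (hBpos : 0 < volume B)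
    {A : Set X} (hAF : ∀ K : Set X, IsCompact K → ∃ x : X, (· + x) '' K ⊆ A) :
    ¬ IsHaarNull (B ×ˢ A) := by
  borelize X
  rw [IsHaarNull, ← (BorelSpace.measurable_eq : _ = borel (ℝ × X))]
  rintro ⟨μ, hμ, S, hBAS, -, hnull⟩
  obtain ⟨z, hz⟩ := exists_measure_preimage_add_prod_pos volume μ (IsProbabilityMeasure.ne_zero μ)
    hB hBpos.ne' hAF
  refine hz.ne' (measure_mono_null ?_ (hnull (-z)))
  exact fun p hp => ⟨p + z, hBAS hp, neg_add_cancel_comm_assoc z p⟩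

theorem haarMeager_meager_not_haarNull_general {X : Type*}
    [TopologicalSpace X] [AddCommGroup X] [PolishSpace X]
    (A : Set X) (hA : MeasurableSet[borel X] A)
    (hAF : ∀ K : Set X, IsCompact K → ∃ x : X, (fun k => k + x) '' K ⊆ A)
    (B : Set ℝ) (hB : MeasurableSet[borel ℝ] B) (hBme : IsMeagre B)
    (hBpos : 0 < volume B) :
    IsHaarMeager (B ×ˢ A) ∧ IsMeagre (B ×ˢ A) ∧ ¬ IsHaarNull (B ×ˢ A) :=
  ⟨isHaarMeager_prod_of_isMeagre hB hBme hA,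
    (hBme.preimage_of_isOpenMap continuous_fst isOpenMap_fst).mono fun _ h => h.1,
    not_isHaarNull_prod hB hBpos hAF⟩

/-- If `A ⊆ X` is a Borel set such that every compact set admits a translate inside `A`,
and `B ⊆ ℝ` is a meager Borel set of positive Lebesgue measure, then `S := B × A` is
Haar meager (hence meager) but not Haar null in `ℝ × X`. -/
theorem haarMeager_meager_not_haarNull {X : Type*}
    [TopologicalSpace X] [AddCommGroup X] [IsTopologicalAddGroup X] [PolishSpace X]
    (A : Set X) (hA : MeasurableSet[borel X] A)
    (hAF : ∀ K : Set X, IsCompact K → ∃ x : X, (fun k => k + x) '' K ⊆ A)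
    (B : Set ℝ) (hB : MeasurableSet[borel ℝ] B) (hBme : IsMeagre B)
    (hBpos : 0 < volume B) :
    IsHaarMeager (B ×ˢ A) ∧ IsMeagre (B ×ˢ A) ∧ ¬ IsHaarNull (B ×ˢ A) :=
  haarMeager_meager_not_haarNull_general A hA hAF B hB hBme hBpos
end

section
/- Let X be an abelian Polish group, let A ⊆ X be a Borel set belonging to F(X) (i.e., for every compact set K ⊆ X there exists x ∈ X with K + x ⊆ A), and let C ⊆ ℝ be a comeager Borel set. Then the set C × A is not Haar meager in the abelian Polish group ℝ × X. -/
open MeasureTheory Set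

/-!
Write `f = (r, s) : K → ℝ × X`. Translating the compact set `s(K)` into `A` by some `x₀`, it
suffices to find `t` such that `r k - t ∈ C` for comeager many `k`: then the translate of
`C × A` by `(t, -x₀)` pulls back to a comeager, hence non-meager, subset of `K`. Such a `t`
exists by the easy half of the Kuratowski–Ulam theorem, applied to the preimage of the meager
set `Cᶜ` under the continuous open map `(t, k) ↦ r k - t` on `ℝ × K`.
-/

open TopologicalSpace

section KuratowskiUlam

variable {α β : Type*} [TopologicalSpace α] [TopologicalSpace β] [SecondCountableTopology β]

theorem IsNowhereDense.eventually_residual_isNowhereDense_section {F : Set (α × β)}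
    (hF : IsNowhereDense F) : ∀ᶠ a in residual α, IsNowhereDense {b | (a, b) ∈ F} := by
  wlog hFc : IsClosed F generalizing F
  · exact (this hF.closure isClosed_closure).mono fun a ha =>
      ha.mono fun _ hb => subset_closure (s := F) hb
  rw [hFc.isNowhereDense_iff] at hF
  have hmeets : ∀ V ∈ countableBasis β, ∀ᶠ a in residual α, ∃ b ∈ V, (a, b) ∉ F := by
    intro V hV
    have hVo := isOpen_of_mem_countableBasis hV
    refine residual_of_dense_open ?_ (dense_iff_inter_open.2 fun U hU ⟨a, ha⟩ => ?_)
    · convert isOpen_biUnion (s := V) fun b _ =>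
        hFc.isOpen_compl.preimage (Continuous.prodMk_left b) using 1
      ext; simp
    · by_contra hUV
      have hUVF : U ×ˢ V ⊆ F := fun ⟨a', b'⟩ ⟨ha', hb'⟩ =>
        by_contra fun h => hUV ⟨a', ha', b', hb', h⟩
      obtain ⟨b, hb⟩ := nonempty_of_mem_countableBasis hV
      have := (hU.prod hVo).subset_interior_iff.2 hUVF
      rw [hF] at this
      exact this (mk_mem_prod ha hb)
  filter_upwards [(eventually_countable_ball (countable_countableBasis β)).2 hmeets] with a ha
  have hcl : IsClosed {b | (a, b) ∈ F} := hFc.preimage (Continuous.prodMk_right a)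
  refine hcl.isNowhereDense_iff.2 (eq_empty_of_forall_notMem fun b hb => ?_)
  obtain ⟨V, hV, hbV, hVsub⟩ :=
    (isBasis_countableBasis β).exists_subset_of_mem_open hb isOpen_interior
  obtain ⟨b', hb'V, hb'F⟩ := ha V hV
  exact hb'F (interior_subset (hVsub hb'V) : b' ∈ {b | (a, b) ∈ F})

theorem IsMeagre.eventually_residual_isMeagre_section {M : Set (α × β)} (hM : IsMeagre M) :
    ∀ᶠ a in residual α, IsMeagre {b | (a, b) ∈ M} := by
  obtain ⟨S, hSnd, hSc, hMS⟩ := isMeagre_iff_countable_union_isNowhereDense.1 hM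
  filter_upwards [(eventually_countable_ball hSc).2 fun F hF =>
    (hSnd F hF).eventually_residual_isNowhereDense_section] with a ha
  refine (isMeagre_biUnion hSc fun F hF => (ha F hF).isMeagre).mono fun b hb => ?_
  simpa using hMS hb

end KuratowskiUlam

section TopologicalAddGroup

variable {G K : Type*} [TopologicalSpace G] [AddGroup G] [IsTopologicalAddGroup G]
  [TopologicalSpace K]

theorem isOpenMap_comp_snd_sub_fst (g : K → G) : IsOpenMap fun p : G × K => g p.2 - p.1 := by
  intro U hU
  have himage : (fun p : G × K => g p.2 - p.1) '' U = ⋃ k, (g k - ·) '' {t | (t, k) ∈ U} := by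
    ext; simp only [mem_image, Prod.exists, mem_iUnion, mem_ofPred_eq]; exact exists_comm
  rw [himage]
  exact isOpen_iUnion fun k =>
    isOpenMap_sub_left (g k) _ (hU.preimage (Continuous.prodMk_left k))

theorem eventually_residual_preimage_sub_mem_residual [SecondCountableTopology K] {g : K → G}
    (hg : Continuous g) {C : Set G} (hC : IsMeagre Cᶜ) :
    ∀ᶠ t in residual G, {k | g k - t ∈ C} ∈ residual K := by
  have hM : IsMeagre ((fun p : G × K => g p.2 - p.1) ⁻¹' Cᶜ) :=
    hC.preimage_of_isOpenMap ((hg.comp continuous_snd).sub continuous_fst)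
      (isOpenMap_comp_snd_sub_fst g)
  filter_upwards [hM.eventually_residual_isMeagre_section] with t ht
  simpa [IsMeagre, compl_ofPred] using ht

end TopologicalAddGroup

theorem not_haarMeager_comeager_prod_general {X : Type*}
    [TopologicalSpace X] [AddCommGroup X] [IsTopologicalAddGroup X] [PolishSpace X]
    (A : Set X)
    (hAF : ∀ K : Set X, IsCompact K → ∃ x : X, (fun k => k + x) '' K ⊆ A)
    (C : Set ℝ) (hCco : IsMeagre Cᶜ) :
    ¬ IsHaarMeager (C ×ˢ A) := by
  rintro ⟨B, hCAB, -, K, _, _, _, f, hf, hmeager⟩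
  obtain ⟨x₀, hx₀⟩ := hAF _ (isCompact_range (continuous_snd.comp hf))
  obtain ⟨t, ht⟩ := (dense_of_mem_residual
    (eventually_residual_preimage_sub_mem_residual (continuous_fst.comp hf) hCco)).nonempty
  have hsub : {k | (f k).1 - t ∈ C} ⊆ f ⁻¹' ((· + (t, -x₀)) '' B) := fun k hk =>
    ⟨((f k).1 - t, (f k).2 + x₀), hCAB ⟨hk, hx₀ ⟨_, mem_range_self k, rfl⟩⟩, by simp⟩
  have hS : IsMeagre {k | (f k).1 - t ∈ C} := (hmeager (t, -x₀)).mono hsub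
  have hSc : IsMeagre {k | (f k).1 - t ∈ C}ᶜ := by rwa [IsMeagre, compl_compl]
  exact not_isMeagre_of_isOpen isOpen_univ univ_nonempty
    ((hS.union hSc).mono (union_compl_self _).ge)

/-- If `A ⊆ X` is a Borel set such that every compact set admits a translate inside `A`,
and `C ⊆ ℝ` is a comeager Borel set, then `C × A` is not Haar meager in `ℝ × X`. -/
theorem not_haarMeager_comeager_prod {X : Type*}
    [TopologicalSpace X] [AddCommGroup X] [IsTopologicalAddGroup X] [PolishSpace X]
    (A : Set X) (hA : MeasurableSet[borel X] A)
    (hAF : ∀ K : Set X, IsCompact K → ∃ x : X, (fun k => k + x) '' K ⊆ A)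
    (C : Set ℝ) (hC : MeasurableSet[borel ℝ] C) (hCco : IsMeagre Cᶜ) :
    ¬ IsHaarMeager (C ×ˢ A) :=
  not_haarMeager_comeager_prod_general A hAF C hCco
end

section
/- Let X be an abelian Polish group, let A ⊆ X be a meager Borel set belonging to F(X) (i.e., for every compact set K ⊆ X there exists x ∈ X with K + x ⊆ A), and let C ⊆ ℝ be a comeager Borel set of Lebesgue measure zero. Then the set T := C × A is Haar null and meager, but not Haar meager, in the abelian Polish group ℝ × X. -/
open MeasureTheory Set

/-!
The Lebesgue-null factor `C` makes `C × A` Haar null: a uniform measure on a segment of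
`ℝ × {0}` sees every translate of `C × X` as a translate of `C`. For non-Haar-meagerness,
given a test map `f = (f₁, f₂) : K → ℝ × X`, first translate the compact set `f₂(K)` into `A`
by some `x`; then a Baire category argument over `t ∈ ℝ` yields a `t` with `f₁⁻¹(C + t)`
comeager in `K`: for a closed nowhere dense `s ⊆ ℝ`, the `t` for which `f₁⁻¹(s + t)` is
somewhere dense are covered by countably many nowhere dense sets, one per basic open set of
`K`. This `f₁⁻¹(C + t)` lies inside `f⁻¹((C × A) + (t, -x))`, which therefore is not meager.
-/

section HaarNull

variable {G Y : Type*} [TopologicalSpace G] [AddCommGroup G] [TopologicalSpace Y] [AddCommGroup Y]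

theorem IsHaarNull.mono {A A' : Set G} (h : A ⊆ A') (hA' : IsHaarNull A') : IsHaarNull A := by
  obtain ⟨μ, hμ, B, hA'B, hB, hμB⟩ := hA'
  exact ⟨μ, hμ, B, h.trans hA'B, hB, hμB⟩

theorem isHaarNull_of_volume_eq_zero {C : Set ℝ} (hC : volume C = 0) : IsHaarNull C := by
  obtain ⟨B, hCB, hB, hB0⟩ := exists_measurable_superset_of_null hC
  have : IsProbabilityMeasure (volume.restrict (Icc (0 : ℝ) 1)) := ⟨by simp⟩
  refine ⟨volume.restrict (Icc 0 1), this, B, hCB, hB, fun x => ?_⟩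
  rw [image_add_left]
  exact nonpos_iff_eq_zero.mp
    ((Measure.restrict_le_self _).trans (by rw [measure_preimage_add, hB0]))

theorem IsHaarNull.preimage_fst [IsTopologicalAddGroup G] {C : Set G} (hC : IsHaarNull C) :
    IsHaarNull (Prod.fst ⁻¹' C : Set (G × Y)) := by
  obtain ⟨μ, hμ, B, hCB, hB, hμB⟩ := hC
  let := borel G
  have : BorelSpace G := ⟨rfl⟩
  let := borel (G × Y)
  have : BorelSpace (G × Y) := ⟨rfl⟩
  have hι : Measurable fun g : G => (g, (0 : Y)) := by fun_prop
  refine ⟨μ.map fun g => (g, 0), Measure.isProbabilityMeasure_map hι.aemeasurable, Prod.fst ⁻¹' B,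
    preimage_mono hCB, continuous_fst.measurable hB, fun x => ?_⟩
  have htrans : (fun b => x + b) '' (Prod.fst ⁻¹' B) = Prod.fst ⁻¹' ((-x.1 + ·) ⁻¹' B) := by
    simp only [image_add_left, preimage_preimage, Prod.fst_add, Prod.fst_neg]
  rw [htrans, Measure.map_apply hι (continuous_fst.measurable (measurable_const_add _ hB)),
    ← image_add_left]
  exact hμB x.1

end HaarNull

section Baire

open TopologicalSpace

variable {K G : Type*} [TopologicalSpace K] [SecondCountableTopology K]
  [TopologicalSpace G] [AddGroup G] [IsTopologicalAddGroup G]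

theorem IsNowhereDense.eventually_residual_isNowhereDense_preimage_sub {s : Set G}
    (hs : IsNowhereDense s) (hsc : IsClosed s) {g : K → G} (hg : Continuous g) :
    ∀ᶠ t in residual G, IsNowhereDense ((fun k => g k - t) ⁻¹' s) := by
  set bad : Set G := ⋃ U ∈ countableBasis K, {t | U.Nonempty ∧ U ⊆ (fun k => g k - t) ⁻¹' s}
  have hbad : IsMeagre bad := by
    refine isMeagre_biUnion (countable_countableBasis K) fun U _ => ?_
    by_cases hU : U.Nonempty
    · obtain ⟨k₀, hk₀⟩ := hU
      have hnd : IsNowhereDense ((Homeomorph.subLeft (g k₀)) ⁻¹' s) := by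
        rw [IsNowhereDense, ← Homeomorph.preimage_closure, ← Homeomorph.preimage_interior,
          hs, preimage_empty]
      exact hnd.isMeagre.mono fun t ht => ht.2 hk₀
    · simpa [hU] using IsMeagre.empty
  filter_upwards [hbad] with t ht
  refine (hsc.preimage (hg.sub continuous_const)).isNowhereDense_iff.mpr ?_
  refine eq_empty_iff_forall_notMem.mpr fun k hk => ht ?_
  obtain ⟨U, hU, hkU, hUs⟩ := (isBasis_countableBasis K).exists_subset_of_mem_open hk
    isOpen_interior
  exact mem_biUnion hU ⟨⟨k, hkU⟩, hUs.trans interior_subset⟩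

theorem IsMeagre.eventually_residual_isMeagre_preimage_sub {M : Set G} (hM : IsMeagre M)
    {g : K → G} (hg : Continuous g) :
    ∀ᶠ t in residual G, IsMeagre ((fun k => g k - t) ⁻¹' M) := by
  obtain ⟨S, hS, hSc, hMS⟩ := isMeagre_iff_countable_union_isNowhereDense.mp hM
  have hcl : ∀ᶠ t in residual G, ∀ s ∈ S, IsNowhereDense ((fun k => g k - t) ⁻¹' closure s) :=
    (eventually_countable_ball hSc).mpr fun s hs =>
      (hS s hs).closure.eventually_residual_isNowhereDense_preimage_sub isClosed_closure hg
  filter_upwards [hcl] with t ht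
  refine (isMeagre_biUnion hSc fun s hs => (ht s hs).isMeagre).mono fun k hk => ?_
  obtain ⟨s, hs, hks⟩ := mem_sUnion.mp (hMS hk)
  exact mem_biUnion hs (subset_closure hks)

end Baire

theorem not_isHaarMeager_prod {G X : Type*} [TopologicalSpace G] [AddCommGroup G]
    [IsTopologicalAddGroup G] [BaireSpace G] [TopologicalSpace X] [AddCommGroup X]
    {C : Set G} (hC : IsMeagre Cᶜ) {A : Set X}
    (hA : ∀ K : Set X, IsCompact K → ∃ x : X, (fun k => k + x) '' K ⊆ A) :
    ¬ IsHaarMeager (C ×ˢ A) := by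
  rintro ⟨B, hAB, -, K, _, _, _, f, hf, hfB⟩
  obtain ⟨x, hx⟩ := hA (range fun k => (f k).2) (isCompact_range hf.snd)
  obtain ⟨t, ht⟩ := (dense_of_mem_residual
    (hC.eventually_residual_isMeagre_preimage_sub hf.fst)).nonempty
  have hsub : (fun k => (f k).1 - t) ⁻¹' C ⊆ f ⁻¹' ((fun b => b + (t, -x)) '' B) := fun k hk =>
    ⟨((f k).1 - t, (f k).2 + x), hAB ⟨hk, hx ⟨_, mem_range_self k, rfl⟩⟩,
      Prod.ext (sub_add_cancel _ _) (add_neg_cancel_right _ _)⟩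
  have hcover : IsMeagre ((fun k => (f k).1 - t) ⁻¹' C ∪ ((fun k => (f k).1 - t) ⁻¹' C)ᶜ) :=
    ((hfB (t, -x)).mono hsub).union ht
  exact not_isMeagre_of_mem_residual Filter.univ_mem (by rwa [union_compl_self] at hcover)

theorem haarNull_meager_not_haarMeager_general {X : Type*}
    [TopologicalSpace X] [AddCommGroup X]
    (A : Set X) (hAme : IsMeagre A)
    (hAF : ∀ K : Set X, IsCompact K → ∃ x : X, (fun k => k + x) '' K ⊆ A)
    (C : Set ℝ) (hCco : IsMeagre Cᶜ)
    (hC0 : volume C = 0) :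
    IsHaarNull (C ×ˢ A) ∧ IsMeagre (C ×ˢ A) ∧ ¬ IsHaarMeager (C ×ˢ A) :=
  ⟨(isHaarNull_of_volume_eq_zero hC0).preimage_fst.mono fun _ hp => hp.1,
    (hAme.preimage_of_isOpenMap continuous_snd isOpenMap_snd).mono fun _ hp => hp.2,
    not_isHaarMeager_prod hCco hAF⟩

/-- If `A ⊆ X` is a meager Borel set such that every compact set admits a translate
inside `A`, and `C ⊆ ℝ` is a comeager Borel set of Lebesgue measure zero, then
`T := C × A` is Haar null and meager, but not Haar meager, in `ℝ × X`. -/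
theorem haarNull_meager_not_haarMeager {X : Type*}
    [TopologicalSpace X] [AddCommGroup X] [IsTopologicalAddGroup X] [PolishSpace X]
    (A : Set X) (hA : MeasurableSet[borel X] A) (hAme : IsMeagre A)
    (hAF : ∀ K : Set X, IsCompact K → ∃ x : X, (fun k => k + x) '' K ⊆ A)
    (C : Set ℝ) (hC : MeasurableSet[borel ℝ] C) (hCco : IsMeagre Cᶜ)
    (hC0 : volume C = 0) :
    IsHaarNull (C ×ˢ A) ∧ IsMeagre (C ×ˢ A) ∧ ¬ IsHaarMeager (C ×ˢ A) :=
  haarNull_meager_not_haarMeager_general A hAme hAF C hCco hC0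
end

section
/- In the Banach space c₀ of real sequences converging to 0 (with the supremum norm), the set A = { (xₙ)ₙ ∈ c₀ : xₙ ≥ 0 for all n } belongs to F(c₀); that is, for every compact set K ⊆ c₀ there exists x ∈ c₀ such that K + x ⊆ A. -/
open ZeroAtInfty

theorem c0_norm_apply_le (f : C₀(ℕ, ℝ)) (n : ℕ) : |f n| ≤ ‖f‖ := by
  rw [← ZeroAtInftyContinuousMap.norm_toBCF_eq_norm]
  exact (f.toBCF.norm_coe_le_norm n)

/-- In the Banach space `c₀ = C₀(ℕ, ℝ)` of real sequences converging to `0` with the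
supremum norm, the set `A` of sequences with all terms nonnegative belongs to `F(c₀)`:
every compact set admits a translate contained in `A`. -/
theorem c0_nonneg_mem_F :
    ∀ K : Set C₀(ℕ, ℝ), IsCompact K →
      ∃ x : C₀(ℕ, ℝ), (fun k => k + x) '' K ⊆ {y : C₀(ℕ, ℝ) | ∀ n : ℕ, 0 ≤ y n} := by
  intro K hK
  obtain ⟨C, hC⟩ := hK.isBounded.exists_norm_le
  -- the pointwise sup of negative parts over K
  set g : ℕ → ℝ := fun n => sSup ((fun k : C₀(ℕ, ℝ) => max 0 (-(k n))) '' K) with hg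
  have hbdd : ∀ n, BddAbove ((fun k : C₀(ℕ, ℝ) => max 0 (-(k n))) '' K) := by
    intro n
    refine ⟨max 0 C, ?_⟩
    rintro _ ⟨k, hk, rfl⟩
    exact max_le_max le_rfl ((neg_le_abs _).trans ((c0_norm_apply_le k n).trans (hC k hk)))
  have hg_nonneg : ∀ n, 0 ≤ g n := by
    intro n
    apply Real.sSup_nonneg
    rintro _ ⟨k, hk, rfl⟩
    exact le_max_left _ _
  have hg_ge : ∀ k ∈ K, ∀ n, max 0 (-(k n)) ≤ g n := by
    intro k hk n
    exact le_csSup (hbdd n) ⟨k, hk, rfl⟩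
  -- g tends to 0 at infinity
  have hg_tendsto : Filter.Tendsto g (Filter.cocompact ℕ) (nhds 0) := by
    rw [Filter.cocompact_eq_cofinite]
    rw [Metric.tendsto_nhds]
    intro ε hε
    have hε4 : (0:ℝ) < ε / 4 := by positivity
    obtain ⟨t, htK, htfin, htcov⟩ := hK.finite_cover_balls hε4
    have hev : ∀ᶠ n in Filter.cofinite, ∀ y ∈ t, |(y : C₀(ℕ, ℝ)) n| < ε / 4 := by
      rw [Filter.eventually_all_finite htfin]
      intro y _
      have := y.zero_at_infty'
      rw [Filter.cocompact_eq_cofinite, Metric.tendsto_nhds] at this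
      simpa [Real.dist_eq] using this (ε / 4) hε4
    filter_upwards [hev] with n hn
    have hgle : g n ≤ ε / 2 := by
      apply Real.sSup_le
      · rintro _ ⟨k, hk, rfl⟩
        obtain ⟨y, hy, hky⟩ := Set.mem_iUnion₂.1 (htcov hk)
        have h1 : |k n - y n| ≤ ‖k - y‖ := by
          simpa using c0_norm_apply_le (k - y) n
        have h2 : ‖k - y‖ < ε / 4 := by
          rwa [← dist_eq_norm, ← Metric.mem_ball]
        have h3 : |k n| ≤ ε / 2 := by
          calc |k n| = |(k n - y n) + y n| := by ring_nf
            _ ≤ |k n - y n| + |y n| := abs_add_le _ _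
            _ ≤ ε / 4 + ε / 4 := add_le_add (h1.trans h2.le) (hn y hy).le
            _ = ε / 2 := by ring
        have h4 : -(k n) ≤ ε / 2 := (neg_le_abs _).trans h3
        exact max_le (by positivity) h4
      · positivity
    rw [Real.dist_eq, sub_zero, abs_of_nonneg (hg_nonneg n)]
    linarith
  set x : C₀(ℕ, ℝ) := ⟨⟨g, continuous_of_discreteTopology⟩, hg_tendsto⟩
  refine ⟨x, ?_⟩
  rintro _ ⟨k, hk, rfl⟩ n
  have h1 : -(k n) ≤ g n := (le_max_right _ _).trans (hg_ge k hk n)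
  have : (k + x) n = k n + g n := rfl
  simp only [Set.mem_setOf_eq]
  rw [this]
  linarith
end

section
/- In the Banach space c₀ of real sequences converging to 0 (with the supremum norm), there exists a set S ⊆ c₀ which is Haar meager (and hence meager) but not Haar null. -/
open MeasureTheory Set

open ZeroAtInfty

/-!
Send `ε ∈ {0,1}^ℕ` to `g ε = (ε n 2⁻ⁿ)ₙ ∈ c₀` and let `S` consist of the `y` such that, for all
large `k`, some `n ∈ [k, 2k)` has `⌊2ⁿ yₙ⌋` even. Adding `2⁻ⁿ` to `yₙ` flips the parity of
`⌊2ⁿ yₙ⌋`, so for each `x` the condition `x + g ε ∈ S` says that `ε` eventually leaves a sequence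
of cylinders `C_k`, each fixing the coordinates in `[k, 2k)`. Since `C_k` has coin-flip measure
`2⁻ᵏ`, Borel–Cantelli makes this condition almost sure, and Fubini against the image of the
coin-flip measure under `g` shows that `S` is not Haar null. On the other hand every `ε` is a limit
of points of `C_k`, so the condition is meagre and `S` is Haar meager; the same approximation
argument in `c₀` shows that `S` is meagre.
-/

open Filter Topology

theorem isMeagre_setOf_eventually_notMem {X : Type*} [TopologicalSpace X] {C : ℕ → Set X}
    (hC : ∀ k, IsOpen (C k))
    (happrox : ∀ x, ∃ u : ℕ → X, Tendsto u atTop (𝓝 x) ∧ ∀ k, u k ∈ C k) :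
    IsMeagre {x | ∀ᶠ k in atTop, x ∉ C k} := by
  have hcompl : {x | ∀ᶠ k in atTop, x ∉ C k}ᶜ = ⋂ m, ⋃ k ≥ m, C k := by
    ext x
    simp
  rw [IsMeagre, hcompl, countable_iInter_mem]
  refine fun m => residual_of_dense_open (isOpen_biUnion fun k _ => hC k) fun x => ?_
  obtain ⟨u, hu, huC⟩ := happrox x
  exact mem_closure_of_tendsto hu
    ((eventually_ge_atTop m).mono fun k hk => mem_iUnion₂.2 ⟨k, hk, huC k⟩)

theorem isHaarMeager_of_forall_isMeagre {G : Type*} [TopologicalSpace G] [AddCommGroup G]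
    {K : Type} [TopologicalSpace K] [TopologicalSpace.MetrizableSpace K] [CompactSpace K]
    [Nonempty K] {f : K → G} (hf : Continuous f) {S : Set G} (hS : MeasurableSet[borel G] S)
    (hmeagre : ∀ x, IsMeagre {k | x + f k ∈ S}) : IsHaarMeager S := by
  refine ⟨S, subset_rfl, hS, K, TopologicalSpace.metrizableSpaceMetric K, ‹_›, ‹_›, f, hf,
    fun x => ?_⟩
  have hpre : f ⁻¹' ((fun b => b + x) '' S) = {k | -x + f k ∈ S} := by
    rw [image_add_right]
    ext k
    simp [add_comm]
  rw [hpre]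
  exact hmeagre (-x)

theorem not_isHaarNull_of_forall_ae_add_mem {G K : Type*} [TopologicalSpace G] [AddCommGroup G]
    [ContinuousAdd G] [TopologicalSpace K] [SecondCountableTopology K] [MeasurableSpace K]
    [BorelSpace K] (ν : Measure K) [IsProbabilityMeasure ν] {f : K → G} (hf : Continuous f)
    {S : Set G} (hS : ∀ x, ∀ᵐ k ∂ν, x + f k ∈ S) : ¬ IsHaarNull S := by
  rintro ⟨μ, hμ, B, hSB, hB, hμB⟩
  let _ : MeasurableSpace G := borel G
  have _ : BorelSpace G := ⟨rfl⟩
  let T : Set (G × K) := {p | p.1 + f p.2 ∈ B}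
  have hT : MeasurableSet T := (continuous_fst.add (hf.comp continuous_snd)).measurable hB
  have hT_null : μ.prod ν T = 0 := by
    have hsection : ∀ k, μ ((fun a => (a, k)) ⁻¹' T) = 0 := fun k => by
      convert hμB (-f k) using 2
      ext a
      simp [T, add_comm]
    simp [Measure.prod_apply_symm hT, hsection]
  have hTc_null : μ.prod ν Tᶜ = 0 :=
    (Measure.measure_prod_null hT.compl).2 <| Eventually.of_forall fun a =>
      measure_mono_null (fun k hk hkS => hk (hSB hkS)) (ae_iff.1 (hS a))
  have huniv := measure_union_null hT_null hTc_null
  rw [union_compl_self, measure_univ] at huniv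
  exact one_ne_zero huniv

namespace HaarMeagerC0

def block (k : ℕ) : Finset ℕ := Finset.Ico k (2 * k)

lemma le_of_mem_block {k n : ℕ} (h : n ∈ block k) : k ≤ n := (Finset.mem_Ico.1 h).1

lemma eventually_notMem_block (k : ℕ) : ∀ᶠ n in atTop, n ∉ block k :=
  (eventually_ge_atTop (2 * k)).mono fun n hn h => by
    have := (Finset.mem_Ico.1 h).2
    omega

lemma card_block (k : ℕ) : (block k).card = k := by
  simp only [block, Nat.card_Ico]
  omega

def blockCylinder (w : ℕ → Bool) (k : ℕ) : Set (ℕ → Bool) := (block k : Set ℕ).pi fun n => {w n}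

lemma isMeagre_eventually_notMem_blockCylinder (w : ℕ → Bool) :
    IsMeagre {ε | ∀ᶠ k in atTop, ε ∉ blockCylinder w k} := by
  refine isMeagre_setOf_eventually_notMem
    (fun k => isOpen_set_pi (block k).finite_toSet fun n _ => isOpen_discrete _) fun ε => ?_
  refine ⟨fun k => (block k : Set ℕ).piecewise w ε, tendsto_pi_nhds.2 fun n => ?_,
    fun k n hn => by simp [Finset.mem_coe.1 hn]⟩
  refine tendsto_const_nhds.congr' <| (eventually_gt_atTop n).mono fun k hk => ?_
  have : n ∉ block k := fun h => absurd hk (not_lt.2 (le_of_mem_block h))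
  simp [this]

noncomputable def coinFlip : Measure (ℕ → Bool) :=
  Measure.infinitePi fun _ => (PMF.uniformOfFintype Bool).toMeasure

instance : IsProbabilityMeasure coinFlip := by
  unfold coinFlip
  infer_instance

lemma coinFlip_blockCylinder (w : ℕ → Bool) (k : ℕ) : coinFlip (blockCylinder w k) = 2⁻¹ ^ k := by
  rw [coinFlip, blockCylinder, Measure.infinitePi_pi]
  · simp [card_block]
  · exact fun _ _ => measurableSet_singleton _

lemma ae_coinFlip_eventually_notMem_blockCylinder (w : ℕ → Bool) :
    ∀ᵐ ε ∂coinFlip, ∀ᶠ k in atTop, ε ∉ blockCylinder w k :=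
  ae_eventually_notMem (by simp [coinFlip_blockCylinder])

noncomputable def ofTendstoZero (g : ℕ → ℝ) (hg : Tendsto g atTop (𝓝 0)) : C₀(ℕ, ℝ) :=
  ⟨⟨g, continuous_of_discreteTopology⟩, by rwa [cocompact_eq_atTop]⟩

@[simp] lemma ofTendstoZero_apply (g : ℕ → ℝ) (hg : Tendsto g atTop (𝓝 0)) (n : ℕ) :
    ofTendstoZero g hg n = g n := rfl

lemma tendsto_atTop_zero (y : C₀(ℕ, ℝ)) : Tendsto y atTop (𝓝 0) := by
  simpa [cocompact_eq_atTop] using zero_at_infty y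

lemma continuous_coord (n : ℕ) : Continuous fun y : C₀(ℕ, ℝ) => y n :=
  (continuous_eval_const n : Continuous fun g : BoundedContinuousFunction ℕ ℝ => g n).comp
    ZeroAtInftyContinuousMap.isometry_toBCF.continuous

lemma norm_le_of_forall_abs_le {y : C₀(ℕ, ℝ)} {C : ℝ} (hC : 0 ≤ C) (h : ∀ n, |y n| ≤ C) :
    ‖y‖ ≤ C := by
  rw [← ZeroAtInftyContinuousMap.norm_toBCF_eq_norm]
  exact (BoundedContinuousFunction.norm_le hC).2 h

lemma tendstoUniformly_piecewise_block {f g : ℕ → ℝ} (hf : Tendsto f atTop (𝓝 0))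
    (hg : Tendsto g atTop (𝓝 0)) :
    TendstoUniformly (fun k => (block k : Set ℕ).piecewise f g) g atTop := by
  refine Metric.tendstoUniformly_iff.2 fun δ hδ => ?_
  obtain ⟨N, hN⟩ := Metric.tendsto_atTop.1 (by simpa using hf.sub hg) δ hδ
  refine (eventually_ge_atTop N).mono fun k hk n => ?_
  by_cases hn : n ∈ block k
  · simpa [hn, dist_comm, dist_eq_norm] using hN n (hk.trans (le_of_mem_block hn))
  · simpa [hn] using hδ

noncomputable def cantorEmbedding (ε : ℕ → Bool) : C₀(ℕ, ℝ) :=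
  ofTendstoZero (fun n => if ε n then 2⁻¹ ^ n else 0) <|
    squeeze_zero_norm (fun n => by split <;> simp)
      (tendsto_pow_atTop_nhds_zero_of_lt_one (r := (2⁻¹ : ℝ)) (by norm_num) (by norm_num))

lemma continuous_cantorEmbedding : Continuous cantorEmbedding := by
  -- the metric `2^-(first index of disagreement)`, whose topology is the product topology
  let _ : MetricSpace (ℕ → Bool) := PiNat.metricSpace
  refine (LipschitzWith.of_dist_le_mul (K := 1) fun ε ε' => ?_).continuous
  rcases eq_or_ne ε ε' with rfl | hne
  · simp
  rw [PiNat.dist_eq_of_ne hne, NNReal.coe_one, one_mul, dist_eq_norm]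
  refine norm_le_of_forall_abs_le (by positivity) fun n => ?_
  rcases lt_or_ge n (PiNat.firstDiff ε ε') with hn | hn
  · simp [cantorEmbedding, PiNat.apply_eq_of_lt_firstDiff hn]
  · calc |(cantorEmbedding ε - cantorEmbedding ε') n| ≤ 2⁻¹ ^ n := by
          simp only [cantorEmbedding, ZeroAtInftyContinuousMap.sub_apply, ofTendstoZero_apply]
          cases ε n <;> cases ε' n <;> simp
      _ ≤ (1 / 2) ^ PiNat.firstDiff ε ε' := by
          rw [one_div]
          exact pow_le_pow_of_le_one (by norm_num) (by norm_num) hn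

def evenFloorOnBlocks : Set C₀(ℕ, ℝ) := {y | ∀ᶠ k in atTop, ∃ n ∈ block k, Even ⌊y n * 2 ^ n⌋}

lemma measurableSet_evenFloorOnBlocks : MeasurableSet[borel C₀(ℕ, ℝ)] evenFloorOnBlocks := by
  let _ : MeasurableSpace C₀(ℕ, ℝ) := borel _
  have _ : BorelSpace C₀(ℕ, ℝ) := ⟨rfl⟩
  have hliminf : evenFloorOnBlocks =
      liminf (fun k => ⋃ n ∈ block k, {y : C₀(ℕ, ℝ) | Even ⌊y n * 2 ^ n⌋}) atTop := by
    ext y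
    simp [evenFloorOnBlocks, mem_liminf_iff_eventually_mem]
  rw [hliminf]
  refine MeasurableSet.measurableSet_liminf fun k =>
    .biUnion (block k).countable_toSet fun n _ => ?_
  exact (Int.measurable_floor.comp ((continuous_coord n).mul continuous_const).measurable)
    (MeasurableSet.of_discrete (s := {z : ℤ | Even z}))

lemma exists_tendsto_eqOn_block (y : C₀(ℕ, ℝ)) {c : ℕ → ℝ} (hc : Tendsto c atTop (𝓝 0)) :
    ∃ u : ℕ → C₀(ℕ, ℝ), Tendsto u atTop (𝓝 y) ∧ ∀ k, ∀ n ∈ block k, u k n = c n := by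
  have hu : ∀ k, Tendsto ((block k : Set ℕ).piecewise c y) atTop (𝓝 0) := fun k =>
    (tendsto_atTop_zero y).congr' <| (eventually_notMem_block k).mono fun n hn =>
      (piecewise_eq_of_notMem _ c y hn).symm
  refine ⟨fun k => ofTendstoZero _ (hu k), ZeroAtInftyContinuousMap.tendsto_iff_tendstoUniformly.2
    (tendstoUniformly_piecewise_block hc (tendsto_atTop_zero y)), fun k n hn => ?_⟩
  simp [hn]

lemma isMeagre_evenFloorOnBlocks : IsMeagre evenFloorOnBlocks := by
  let D : ℕ → Set C₀(ℕ, ℝ) := fun k => ⋂ n ∈ block k, {y | y n * 2 ^ n ∈ Ioo 1 2}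
  have hD : ∀ k, IsOpen (D k) := fun k => isOpen_biInter_finset fun n _ =>
    isOpen_Ioo.preimage ((continuous_coord n).mul continuous_const)
  have hc : Tendsto (fun n : ℕ => 3 / 2 * (2⁻¹ : ℝ) ^ n) atTop (𝓝 0) := by
    simpa using (tendsto_pow_atTop_nhds_zero_of_lt_one (r := (2⁻¹ : ℝ)) (by norm_num)
      (by norm_num)).const_mul (3 / 2 : ℝ)
  refine (isMeagre_setOf_eventually_notMem hD fun y => ?_).mono fun y hy => ?_
  · obtain ⟨u, hu, huc⟩ := exists_tendsto_eqOn_block y hc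
    refine ⟨u, hu, fun k => mem_iInter₂.2 fun n hn => ?_⟩
    have h2n : (2⁻¹ : ℝ) ^ n * 2 ^ n = 1 := by rw [← mul_pow]; norm_num
    simp only [mem_ofPred_eq, huc k n hn, mul_assoc, h2n]
    norm_num
  · refine hy.mono fun k ⟨n, hn, heven⟩ hyD => ?_
    have hfloor : ⌊y n * 2 ^ n⌋ = 1 := by
      obtain ⟨h1, h2⟩ := mem_iInter₂.1 hyD n hn
      exact Int.floor_eq_iff.2 ⟨by exact_mod_cast h1.le, by push_cast; linarith⟩
    exact Int.not_even_one (hfloor ▸ heven)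

noncomputable def floorIsEven (x : C₀(ℕ, ℝ)) (n : ℕ) : Bool := decide (Even ⌊x n * 2 ^ n⌋)

lemma even_floor_add_iff (a : ℝ) (b : Bool) (n : ℕ) :
    Even ⌊(a + if b then 2⁻¹ ^ n else 0) * 2 ^ n⌋ ↔ b ≠ decide (Even ⌊a * 2 ^ n⌋) := by
  cases b <;> simp [add_mul]

lemma add_cantorEmbedding_mem_iff (x : C₀(ℕ, ℝ)) (ε : ℕ → Bool) :
    x + cantorEmbedding ε ∈ evenFloorOnBlocks ↔
      ∀ᶠ k in atTop, ε ∉ blockCylinder (floorIsEven x) k := by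
  simp only [evenFloorOnBlocks, blockCylinder, cantorEmbedding, floorIsEven, mem_ofPred_eq,
    ZeroAtInftyContinuousMap.add_apply, ofTendstoZero_apply, even_floor_add_iff, Set.mem_pi,
    Finset.mem_coe, mem_singleton_iff, not_forall, exists_prop]

end HaarMeagerC0

open HaarMeagerC0

/-- In the Banach space `c₀ = C₀(ℕ, ℝ)` of real sequences converging to `0` with the
supremum norm, there exists a set which is Haar meager (hence meager) but not Haar null. -/
theorem exists_haarMeager_not_haarNull_c0 :
    ∃ S : Set C₀(ℕ, ℝ), IsHaarMeager S ∧ IsMeagre S ∧ ¬ IsHaarNull S := by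
  refine ⟨evenFloorOnBlocks, ?_, isMeagre_evenFloorOnBlocks, ?_⟩
  · refine isHaarMeager_of_forall_isMeagre continuous_cantorEmbedding
      measurableSet_evenFloorOnBlocks fun x => ?_
    simpa only [add_cantorEmbedding_mem_iff] using
      isMeagre_eventually_notMem_blockCylinder (floorIsEven x)
  · refine not_isHaarNull_of_forall_ae_add_mem coinFlip continuous_cantorEmbedding fun x => ?_
    simpa only [add_cantorEmbedding_mem_iff] using
      ae_coinFlip_eventually_notMem_blockCylinder (floorIsEven x)
end

section
/- For every real number p with 1 ≤ p < ∞, in the Banach space ℓᵖ of real p-summable sequences there exists a set S which is Haar meager (and hence meager) but not Haar null. -/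
open MeasureTheory Set

/-!
Let `w = (2⁻ⁿ)ₙ` and let `S` be the set of sequences whose `n`-th coordinate avoids, for every
`n`, the open set `Gₙ = ⋃ⱼ (j 4⁻ⁿ, j 4⁻ⁿ + 8⁻ⁿ⁻¹)`; `S` is closed.

Along a line `x + ℝ w` the `n`-th coordinate moves at speed `2⁻ⁿ`, so every parameter interval
longer than `2⁻ⁿ` crosses a gap of `Gₙ`. Hence `S` meets every such line in a nowhere dense set,
which makes `S` Haar meager (test map `t ↦ t • w` on `[0, 1]`) and nowhere dense.

On the other hand, `t ∈ [0, 1]` puts the `n`-th coordinate of `y + t • w` into `Gₙ` with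
probability at most `3 · 2⁻ⁿ / 8`, and these bounds sum to `3 / 4 < 1`. So every translate of `S`
meets the segment `[0, 1] • w` in positive measure, and by Fubini no Borel probability measure can
annihilate all translates of `S`.
-/

open scoped ENNReal

section Lines

variable {E : Type*} [AddCommGroup E] [Module ℝ E] [TopologicalSpace E] [IsTopologicalAddGroup E]
  [ContinuousSMul ℝ E] {B : Set E} {w : E}

theorem interior_eq_empty_of_forall_dense_add_smul_notMem
    (hB : ∀ x, Dense {t : ℝ | x + t • w ∉ B}) : interior B = ∅ := by
  refine eq_empty_of_forall_notMem fun x hx => ?_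
  have hU : IsOpen {t : ℝ | x + t • w ∈ interior B} :=
    isOpen_interior.preimage (continuous_const.add (continuous_id.smul continuous_const))
  obtain ⟨t, htB, hnotB⟩ := (hB x).inter_open_nonempty _ hU ⟨0, by simpa using hx⟩
  exact hnotB (interior_subset htB)

theorem IsClosed.isHaarMeager_of_forall_dense_add_smul_notMem (hc : IsClosed B)
    (hB : ∀ x, Dense {t : ℝ | x + t • w ∉ B}) : IsHaarMeager B := by
  refine ⟨B, subset_rfl, (MeasurableSpace.measurableSet_generateFrom hc.isOpen_compl).of_compl,
    Icc (0 : ℝ) 1, inferInstance, inferInstance, ⟨⟨0, left_mem_Icc.2 zero_le_one⟩⟩,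
    fun t => (t : ℝ) • w, continuous_subtype_val.smul continuous_const, fun x => ?_⟩
  set D := {t : ℝ | -x + t • w ∉ B}
  have hpre : (fun t : Icc (0 : ℝ) 1 => (t : ℝ) • w) ⁻¹' ((fun b => b + x) '' B) =
      (Subtype.val ⁻¹' D)ᶜ := by
    ext t
    simp [D, add_comm]
  have hD_open : IsOpen D :=
    hc.isOpen_compl.preimage (continuous_const.add (continuous_id.smul continuous_const))
  have hD_dense : Dense (Subtype.val ⁻¹' D : Set (Icc (0 : ℝ) 1)) := by
    rw [Subtype.dense_iff, Subtype.image_preimage_coe]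
    calc Icc (0 : ℝ) 1 = closure (Ioo 0 1) := (closure_Ioo zero_ne_one).symm
      _ ⊆ closure (Ioo 0 1 ∩ D) :=
        closure_minimal ((hB (-x)).open_subset_closure_inter isOpen_Ioo) isClosed_closure
      _ ⊆ closure (Icc 0 1 ∩ D) := closure_mono (inter_subset_inter_left _ Ioo_subset_Icc_self)
  rw [hpre]
  exact IsNowhereDense.isMeagre (isClosed_isNowhereDense_iff_compl.2
    (by rw [compl_compl]; exact ⟨hD_open.preimage continuous_subtype_val, hD_dense⟩)).2

end Lines

theorem not_isHaarNull_of_forall_measure_add_mem_ne_zero {G T : Type*} [AddCommGroup G]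
    [TopologicalSpace G] [IsTopologicalAddGroup G] [TopologicalSpace T] [SecondCountableTopology T]
    [MeasurableSpace T] [BorelSpace T] {ν : Measure T} [SFinite ν] {g : T → G} (hg : Continuous g)
    {A : Set G} (hA : ∀ y, ν {t | y + g t ∈ A} ≠ 0) : ¬ IsHaarNull A := by
  let _ : MeasurableSpace G := borel G
  have _ : BorelSpace G := ⟨rfl⟩
  rintro ⟨μ, _, B, hAB, hB, hμB⟩
  set S := {q : T × G | q.2 + g q.1 ∈ B}
  have hS : MeasurableSet S := (continuous_snd.add (hg.comp continuous_fst)).measurable hB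
  have hslice (t : T) : Prod.mk t ⁻¹' S = (fun b => -g t + b) '' B := by
    ext y
    simp [S, add_comm]
  have hzero : ν.prod μ S = 0 := by
    simp only [Measure.prod_apply hS, hslice, hμB, lintegral_zero]
  rw [Measure.prod_apply_symm hS, lintegral_eq_zero_iff (measurable_measure_prodMk_right hS)]
    at hzero
  obtain ⟨y, hy⟩ := hzero.exists
  exact hA y (measure_mono_null (fun t ht => hAB ht) hy)

def periodicGaps (P e : ℝ) : Set ℝ := ⋃ j : ℤ, Ioo (j * P) (j * P + e)

section PeriodicGaps

variable {P e : ℝ}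

theorem isOpen_periodicGaps : IsOpen (periodicGaps P e) :=
  isOpen_iUnion fun _ => isOpen_Ioo

theorem Ioo_inter_periodicGaps_nonempty (hP : 0 < P) (he : 0 < e) {a b : ℝ} (hab : a + P < b) :
    (Ioo a b ∩ periodicGaps P e).Nonempty := by
  set j : ℤ := ⌊a / P⌋ + 1
  have hja : a < j * P := by
    rw [← div_lt_iff₀ hP]
    exact_mod_cast Int.lt_floor_add_one (a / P)
  have hjb : j * P ≤ a + P := by
    refine (le_div_iff₀ hP).1 ?_
    rw [add_div, div_self hP.ne']
    push_cast [j]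
    linarith [Int.floor_le (a / P)]
  have hm : 0 < min e (b - j * P) := lt_min he (by linarith)
  have hme := min_le_left e (b - j * P)
  have hmb := min_le_right e (b - j * P)
  exact ⟨j * P + min e (b - j * P) / 2, ⟨by linarith, by linarith⟩,
    mem_iUnion.2 ⟨j, by linarith, by linarith⟩⟩

theorem volume_Icc_inter_periodicGaps_le (hP : 0 < P) (he : 0 ≤ e) {a b : ℝ} (hab : a ≤ b) :
    volume (Icc a b ∩ periodicGaps P e) ≤ ENNReal.ofReal (((b - a + e) / P + 1) * e) := by
  set J := Finset.Ioo ⌊(a - e) / P⌋ ⌈b / P⌉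
  have hcover : Icc a b ∩ periodicGaps P e ⊆ ⋃ j ∈ J, Ioo (j * P) (j * P + e) := by
    rintro s ⟨⟨has, hsb⟩, hs⟩
    obtain ⟨j, hjs, hsj⟩ := mem_iUnion.1 hs
    refine mem_iUnion₂.2 ⟨j, Finset.mem_Ioo.2 ⟨?_, ?_⟩, hjs, hsj⟩
    · rw [Int.floor_lt, div_lt_iff₀ hP]; linarith
    · rw [Int.lt_ceil, lt_div_iff₀ hP]; linarith
  have hcard : (J.card : ℝ) ≤ (b - a + e) / P + 1 := by
    have h1 := Int.ceil_lt_add_one (b / P)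
    have h2 := Int.sub_one_lt_floor ((a - e) / P)
    have h3 : (b - a + e) / P = b / P - (a - e) / P := by ring
    rw [Int.card_Ioo, ← Int.cast_natCast, Int.toNat_eq_max, Int.cast_max]
    push_cast
    exact max_le (by linarith) (by positivity)
  calc volume (Icc a b ∩ periodicGaps P e)
      ≤ ∑ j ∈ J, volume (Ioo (j * P) (j * P + e)) :=
        (measure_mono hcover).trans (measure_biUnion_finset_le _ _)
    _ = J.card * ENNReal.ofReal e := by simp
    _ ≤ ENNReal.ofReal (((b - a + e) / P + 1) * e) := by
        rw [← ENNReal.ofReal_natCast, ← ENNReal.ofReal_mul (Nat.cast_nonneg _)]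
        exact ENNReal.ofReal_le_ofReal (mul_le_mul_of_nonneg_right hcard he)

end PeriodicGaps

theorem Real.volume_preimage_add_mul {c w : ℝ} (hw : 0 < w) (s : Set ℝ) :
    volume ((fun t => c + t * w) ⁻¹' s) = ENNReal.ofReal w⁻¹ * volume s := by
  change volume ((· * w) ⁻¹' ((c + ·) ⁻¹' s)) = _
  rw [Real.volume_preimage_mul_right hw.ne', measure_preimage_add, abs_of_pos (inv_pos.2 hw)]

theorem volume_preimage_periodicGaps_inter_Icc_le {P e w : ℝ} (hP : 0 < P) (he : 0 ≤ e)
    (heP : e ≤ P) (hPw : P ≤ w) (c : ℝ) :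
    volume ((fun t => c + t * w) ⁻¹' periodicGaps P e ∩ Icc 0 1) ≤
      ENNReal.ofReal (3 * (e / P)) := by
  have hw : 0 < w := hP.trans_le hPw
  have hIcc : (fun t => c + t * w) ⁻¹' Icc c (c + w) = Icc 0 1 := by
    ext t
    simp [mul_nonneg_iff_of_pos_right hw, mul_le_iff_le_one_left hw]
  rw [← hIcc, ← preimage_inter, Real.volume_preimage_add_mul hw, inter_comm]
  calc ENNReal.ofReal w⁻¹ * volume (Icc c (c + w) ∩ periodicGaps P e)
      ≤ ENNReal.ofReal w⁻¹ * ENNReal.ofReal (((c + w - c + e) / P + 1) * e) :=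
        mul_le_mul_right (volume_Icc_inter_periodicGaps_le hP he (by linarith)) _
    _ ≤ ENNReal.ofReal (3 * (e / P)) := by
        rw [← ENNReal.ofReal_mul (by positivity)]
        refine ENNReal.ofReal_le_ofReal ?_
        have hew : e / w ≤ 1 := (div_le_one hw).2 (heP.trans hPw)
        have hPw' : P / w ≤ 1 := (div_le_one hw).2 hPw
        calc w⁻¹ * (((c + w - c + e) / P + 1) * e) = e / P * (1 + e / w + P / w) := by
              field_simp; ring
          _ ≤ e / P * 3 := by gcongr; linarith
          _ = 3 * (e / P) := mul_comm _ _

section GapSet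

variable {E : Type*} [AddCommGroup E] [Module ℝ E] [TopologicalSpace E]

def gapSet (φ : ℕ → E →L[ℝ] ℝ) : Set E :=
  {x | ∀ n, φ n x ∉ periodicGaps ((4 : ℝ)⁻¹ ^ n) ((8 : ℝ)⁻¹ ^ (n + 1))}

theorem isClosed_gapSet (φ : ℕ → E →L[ℝ] ℝ) : IsClosed (gapSet φ) := by
  rw [gapSet, ofPred_forall]
  exact isClosed_iInter fun n => isOpen_periodicGaps.isClosed_compl.preimage (φ n).continuous

variable {φ : ℕ → E →L[ℝ] ℝ} {w : E}

theorem dense_setOf_add_smul_notMem_gapSet (hw : ∀ n, φ n w = 2⁻¹ ^ n) (x : E) :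
    Dense {t : ℝ | x + t • w ∉ gapSet φ} := by
  refine dense_of_exists_between fun a b hab => ?_
  obtain ⟨n, hn⟩ : ∃ n : ℕ, (2 : ℝ)⁻¹ ^ n < b - a :=
    exists_pow_lt_of_lt_one (sub_pos.2 hab) (by norm_num)
  have hwn : (0 : ℝ) < 2⁻¹ ^ n := by positivity
  have h4 : (4 : ℝ)⁻¹ ^ n = 2⁻¹ ^ n * 2⁻¹ ^ n := by rw [← mul_pow]; norm_num
  obtain ⟨s, ⟨has, hsb⟩, hs⟩ := Ioo_inter_periodicGaps_nonempty (P := 4⁻¹ ^ n)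
    (e := 8⁻¹ ^ (n + 1)) (by positivity) (by positivity)
    (show φ n x + a * 2⁻¹ ^ n + 4⁻¹ ^ n < φ n x + b * 2⁻¹ ^ n by rw [h4]; nlinarith)
  refine ⟨(s - φ n x) / 2⁻¹ ^ n, fun hmem => hmem n ?_, ?_, ?_⟩
  · rwa [map_add, map_smul, hw, smul_eq_mul, div_mul_cancel₀ _ hwn.ne', add_sub_cancel]
  · rw [lt_div_iff₀ hwn]; linarith
  · rw [div_lt_iff₀ hwn]; linarith

theorem volume_restrict_setOf_add_smul_notMem_gapSet_le (hw : ∀ n, φ n w = 2⁻¹ ^ n) (y : E) :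
    volume.restrict (Icc (0 : ℝ) 1) {t | y + t • w ∉ gapSet φ} ≤ ENNReal.ofReal (3 / 4) := by
  set ν := volume.restrict (Icc (0 : ℝ) 1)
  have hratio (n : ℕ) : (8 : ℝ)⁻¹ ^ (n + 1) / 4⁻¹ ^ n = 8⁻¹ * 2⁻¹ ^ n := by
    rw [pow_succ, show (8 : ℝ)⁻¹ ^ n = 4⁻¹ ^ n * 2⁻¹ ^ n by rw [← mul_pow]; norm_num]
    field_simp
  calc ν {t | y + t • w ∉ gapSet φ}
      = ν (⋃ n, (fun t => φ n y + t * 2⁻¹ ^ n) ⁻¹' periodicGaps (4⁻¹ ^ n) (8⁻¹ ^ (n + 1))) := by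
        congr 1
        ext t
        simp [gapSet, hw]
    _ ≤ ∑' n, ν ((fun t => φ n y + t * 2⁻¹ ^ n) ⁻¹' periodicGaps (4⁻¹ ^ n) (8⁻¹ ^ (n + 1))) :=
        measure_iUnion_le _
    _ ≤ ∑' n : ℕ, ENNReal.ofReal (3 * (8⁻¹ ^ (n + 1) / 4⁻¹ ^ n)) := by
        refine ENNReal.tsum_le_tsum fun n => ?_
        rw [Measure.restrict_apply' measurableSet_Icc]
        refine volume_preimage_periodicGaps_inter_Icc_le (by positivity) (by positivity) ?_ ?_ _
        · calc (8 : ℝ)⁻¹ ^ (n + 1) ≤ 8⁻¹ ^ n :=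
              pow_le_pow_of_le_one (by norm_num) (by norm_num) n.le_succ
            _ ≤ 4⁻¹ ^ n := by gcongr; norm_num
        · gcongr; norm_num
    _ = ENNReal.ofReal (3 / 4) := by
        simp_rw [hratio]
        rw [← ENNReal.ofReal_tsum_of_nonneg (fun n => by positivity)
          ((summable_geometric_of_lt_one (by norm_num) (by norm_num)).mul_left _ |>.mul_left _)]
        rw [tsum_mul_left, tsum_mul_left, tsum_geometric_inv_two]
        norm_num

theorem volume_restrict_setOf_add_smul_mem_gapSet_ne_zero (hw : ∀ n, φ n w = 2⁻¹ ^ n) (y : E) :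
    volume.restrict (Icc (0 : ℝ) 1) {t | y + t • w ∈ gapSet φ} ≠ 0 := by
  set ν := volume.restrict (Icc (0 : ℝ) 1)
  intro h0
  have hν : ν univ = 1 := by simp [ν]
  have h1 : ν univ ≤ ENNReal.ofReal (3 / 4) := calc
    ν univ ≤ ν {t | y + t • w ∈ gapSet φ} + ν {t | y + t • w ∈ gapSet φ}ᶜ :=
      measure_univ_le_add_compl _
    _ ≤ ENNReal.ofReal (3 / 4) := by
      rw [h0, zero_add]
      exact volume_restrict_setOf_add_smul_notMem_gapSet_le hw y
  exact (ENNReal.ofReal_lt_one.2 (by norm_num)).not_ge (hν ▸ h1)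

variable [IsTopologicalAddGroup E] [ContinuousSMul ℝ E]

theorem isHaarMeager_gapSet (hw : ∀ n, φ n w = 2⁻¹ ^ n) : IsHaarMeager (gapSet φ) :=
  (isClosed_gapSet φ).isHaarMeager_of_forall_dense_add_smul_notMem
    (dense_setOf_add_smul_notMem_gapSet hw)

theorem isMeagre_gapSet (hw : ∀ n, φ n w = 2⁻¹ ^ n) : IsMeagre (gapSet φ) :=
  ((isClosed_gapSet φ).isNowhereDense_iff.2 (interior_eq_empty_of_forall_dense_add_smul_notMem
    (dense_setOf_add_smul_notMem_gapSet hw))).isMeagre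

theorem not_isHaarNull_gapSet (hw : ∀ n, φ n w = 2⁻¹ ^ n) : ¬ IsHaarNull (gapSet φ) :=
  not_isHaarNull_of_forall_measure_add_mem_ne_zero (continuous_id.smul continuous_const)
    (volume_restrict_setOf_add_smul_mem_gapSet_ne_zero hw)

end GapSet

theorem memℓp_two_inv_pow (p : ℝ≥0∞) [Fact (1 ≤ p)] : Memℓp (fun n : ℕ => (2 : ℝ)⁻¹ ^ n) p :=
  (memℓp_gen (p := 1) (by simpa using summable_geometric_two)).of_exponent_ge Fact.out

/-- For every real `p` with `1 ≤ p < ∞`, in the Banach space `ℓᵖ` of real `p`-summable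
sequences there exists a set which is Haar meager (hence meager) but not Haar null. -/
theorem exists_haarMeager_not_haarNull_lp (p : ℝ) (hp : 1 ≤ p) :
    letI : Fact (1 ≤ ENNReal.ofReal p) := ⟨ENNReal.one_le_ofReal.mpr hp⟩
    ∃ S : Set (lp (fun _ : ℕ => ℝ) (ENNReal.ofReal p)),
      IsHaarMeager S ∧ IsMeagre S ∧ ¬ IsHaarNull S := by
  have : Fact (1 ≤ ENNReal.ofReal p) := ⟨ENNReal.one_le_ofReal.mpr hp⟩
  let w : lp (fun _ : ℕ => ℝ) (ENNReal.ofReal p) := ⟨_, memℓp_two_inv_pow _⟩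
  have hw (n : ℕ) : lp.evalCLM ℝ (fun _ => ℝ) (ENNReal.ofReal p) n w = 2⁻¹ ^ n := rfl
  exact ⟨_, isHaarMeager_gapSet hw, isMeagre_gapSet hw, not_isHaarNull_gapSet hw⟩
end
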